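/- arXiv:2501.12412 — 2 statements merged into one kernel-verified Lean document; each statement's English description precedes it below -/
import Mathlib

section
/- Let k ≥ 1 be an integer and G a strongly connected digraph with m arcs and maximum outdegree Δ⁺(G) ≤ m − k. If m ≥ 3k and α ∈ [1/2, 1), then λ_α(G) ≤ α(m−k) + (1−α)k/(m−k) + 1 − α. -/
open Matrix Finset ENNReal

/-- The outdegree of a vertex in a digraph given by its arc relation. -/
def outDeg {V : Type*} [Fintype V] (E : V → V → Prop) [DecidableRel E] (u : V) : ℕ :=
  (Finset.univ.filter (fun v => E u v)).card

/-- The maximum outdegree. -/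
def maxOutDeg {V : Type*} [Fintype V] (E : V → V → Prop) [DecidableRel E] : ℕ :=
  Finset.univ.sup (outDeg E)

/-- A simple digraph has no loops. -/
def IsSimpleDigraph {V : Type*} (E : V → V → Prop) : Prop := ∀ v, ¬ E v v

/-- Strong connectivity: every vertex reaches every other by a directed walk. -/
def StronglyConnected {V : Type*} (E : V → V → Prop) : Prop :=
  ∀ u v, Relation.ReflTransGen E u v

/-- The A_α matrix  α D + (1-α) A  of a digraph, over ℂ. -/
noncomputable def Aalpha {V : Type*} [Fintype V] [DecidableEq V] (α : ℝ)
    (E : V → V → Prop) [DecidableRel E] : Matrix V V ℂ :=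
  (α : ℂ) • Matrix.diagonal (fun u => (outDeg E u : ℂ)) +
    ((1 - α : ℝ) : ℂ) • Matrix.of (fun u v => if E u v then (1 : ℂ) else 0)

/-- The A_α spectral radius of a digraph. -/
noncomputable def lambdaAlpha {V : Type*} [Fintype V] [DecidableEq V] (α : ℝ)
    (E : V → V → Prop) [DecidableRel E] : ℝ≥0∞ :=
  spectralRadius ℂ (Aalpha α E)

/-- The signless Laplacian matrix D + A of a digraph, over ℂ. -/
noncomputable def signlessLaplacian {V : Type*} [Fintype V] [DecidableEq V]
    (E : V → V → Prop) [DecidableRel E] : Matrix V V ℂ :=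
  Matrix.diagonal (fun u => (outDeg E u : ℂ)) +
    Matrix.of (fun u v => if E u v then (1 : ℂ) else 0)

/-- The signless Laplacian spectral radius of a digraph. -/
noncomputable def qSpec {V : Type*} [Fintype V] [DecidableEq V]
    (E : V → V → Prop) [DecidableRel E] : ℝ≥0∞ :=
  spectralRadius ℂ (signlessLaplacian E)

/-!
If `μ` is an eigenvalue of `A_α(G)` with eigenvector `z`, look at a vertex `u` maximising
`|z_v| / d_v`, i.e. apply Gershgorin's theorem to `D⁻¹ A_α(G) D`. Row `u` gives
`|μ| ≤ α d_u + (1 - α) t_u / d_u`, where `t_u` is the sum of the outdegrees of the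
out-neighbours of `u`. Since `G` is loopless, `t_u ≤ m - d_u`, and `t_u ≤ d_u Δ⁺ ≤ d_u (m - k)`;
for `α ≥ 1/2` these two bounds on `t_u` and `d_u ≤ m - k` give the claim by elementary algebra.
-/

theorem alpha_mul_add_div_le {x S m k α : ℝ} (hkm : k < m) (hx : 0 < x) (hxd : x ≤ m - k)
    (hS₁ : S ≤ m - x) (hS₂ : S ≤ x * (m - k)) (hα : 1 / 2 ≤ α) (hα1 : α ≤ 1) :
    α * x + (1 - α) * S / x ≤ α * (m - k) + (1 - α) * k / (m - k) + 1 - α := by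
  obtain ⟨d, rfl⟩ : ∃ d, m = d + k := ⟨m - k, by ring⟩
  rw [add_sub_cancel_right] at hxd hS₂ ⊢
  have hd : 0 < d := by linarith
  have hd_x : 0 ≤ d - x := sub_nonneg.2 hxd
  have key : α * x * x * d + (1 - α) * S * d ≤
      α * d * d * x + (1 - α) * k * x + (1 - α) * d * x := by
    -- `S ≤ x * d` is the sharper bound when `x * d ≤ d + k`, and `S ≤ d + k - x` otherwise
    rcases le_total (x * d) (d + k) with h | h
    · nlinarith [mul_nonneg (mul_nonneg hx.le hd.le) (mul_nonneg hd_x (by linarith : 0 ≤ 2 * α - 1)),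
        mul_le_mul_of_nonneg_left hS₂ (by nlinarith : 0 ≤ (1 - α) * d),
        mul_nonneg hx.le (mul_nonneg (by linarith : 0 ≤ 1 - α) (sub_nonneg.2 h))]
    · nlinarith [mul_le_mul_of_nonneg_left hS₁ (by nlinarith : 0 ≤ (1 - α) * d),
        mul_nonneg hd_x (mul_nonneg (by linarith : 0 ≤ 1 - α) (sub_nonneg.2 h)),
        mul_nonneg hd_x (mul_nonneg (mul_nonneg hx.le hd.le) (by linarith : 0 ≤ 2 * α - 1)),
        mul_nonneg (mul_nonneg hx.le hd.le) (by linarith : 0 ≤ 1 - α)]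
  have hdiff : α * d + (1 - α) * k / d + 1 - α - (α * x + (1 - α) * S / x) =
      (α * d * d * x + (1 - α) * k * x + (1 - α) * d * x - (α * x * x * d + (1 - α) * S * d)) /
        (x * d) := by
    field_simp
    ring
  rw [← sub_nonneg, hdiff]
  exact div_nonneg (by linarith) (by positivity)

theorem Matrix.exists_norm_mul_le_sum_norm_mul_of_mem_spectrum {K n : Type*} [NormedField K]
    [Fintype n] [DecidableEq n] {A : Matrix n n K} {w : n → ℝ} (hw : ∀ i, 0 < w i) {μ : K}
    (hμ : μ ∈ spectrum K A) : ∃ i, ‖μ‖ * w i ≤ ∑ j, ‖A i j‖ * w j := by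
  rw [← Matrix.spectrum_toLin', ← Module.End.hasEigenvalue_iff_mem_spectrum] at hμ
  obtain ⟨v, hv_eig, hv_ne⟩ := hμ.exists_hasEigenvector
  obtain ⟨j₀, -⟩ := Function.ne_iff.1 hv_ne
  obtain ⟨i, -, hi⟩ := exists_max_image univ (fun j => ‖v j‖ / w j) ⟨j₀, mem_univ j₀⟩
  set r := ‖v i‖ / w i
  have hv_le : ∀ j, ‖v j‖ ≤ w j * r := fun j => (div_le_iff₀' (hw j)).1 (hi j (mem_univ j))
  have hr : 0 < r := by
    by_contra! hr
    exact hv_ne (funext fun j => norm_le_zero_iff.1 <|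
      (hv_le j).trans (mul_nonpos_of_nonneg_of_nonpos (hw j).le hr))
  have hrow : μ * v i = ∑ j, A i j * v j :=
    (congrFun (Module.End.mem_eigenspace_iff.1 hv_eig) i).symm
  refine ⟨i, le_of_mul_le_mul_right ?_ hr⟩
  calc ‖μ‖ * w i * r = ‖∑ j, A i j * v j‖ := by
        rw [mul_assoc, mul_div_cancel₀ _ (hw i).ne', ← norm_mul, hrow]
    _ ≤ ∑ j, ‖A i j‖ * ‖v j‖ := (norm_sum_le _ _).trans_eq (by simp_rw [norm_mul])
    _ ≤ ∑ j, ‖A i j‖ * (w j * r) :=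
        sum_le_sum fun j _ => mul_le_mul_of_nonneg_left (hv_le j) (norm_nonneg _)
    _ = (∑ j, ‖A i j‖ * w j) * r := by simp_rw [sum_mul, mul_assoc]

section Digraph

variable {V : Type*} [Fintype V] (E : V → V → Prop) [DecidableRel E]

def twoOutDeg (u : V) : ℕ := ∑ v ∈ univ.filter (E u), outDeg E v

lemma norm_Aalpha_apply_le [DecidableEq V] {α : ℝ} (hα0 : 0 ≤ α) (hα1 : α ≤ 1) (u v : V) :
    ‖Aalpha α E u v‖ ≤ (if u = v then α * outDeg E u else 0) + if E u v then 1 - α else 0 := by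
  have h1α : ‖((1 - α : ℝ) : ℂ)‖ = 1 - α := by
    rw [Complex.norm_real, Real.norm_of_nonneg (by linarith)]
  refine (norm_add_le _ _).trans (add_le_add ?_ ?_)
  · split_ifs with h
    · subst h; simp [Complex.norm_real, abs_of_nonneg hα0]
    · simp [h]
  · split_ifs with h
    · simpa [h] using h1α.le
    · simp [h]

lemma sum_norm_Aalpha_mul_outDeg_le [DecidableEq V] {α : ℝ} (hα0 : 0 ≤ α) (hα1 : α ≤ 1) (u : V) :
    ∑ v, ‖Aalpha α E u v‖ * outDeg E v ≤ α * outDeg E u ^ 2 + (1 - α) * twoOutDeg E u := by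
  calc ∑ v, ‖Aalpha α E u v‖ * outDeg E v
      ≤ ∑ v, ((if u = v then α * outDeg E u else 0) + if E u v then 1 - α else 0) * outDeg E v :=
        sum_le_sum fun v _ =>
          mul_le_mul_of_nonneg_right (norm_Aalpha_apply_le E hα0 hα1 u v) (Nat.cast_nonneg _)
    _ = α * outDeg E u ^ 2 + (1 - α) * twoOutDeg E u := by
        simp [add_mul, sum_add_distrib, ite_mul, twoOutDeg, sum_filter, mul_sum, sq, mul_assoc]

variable {E}

lemma twoOutDeg_add_outDeg_le [DecidableEq V] (hsimple : IsSimpleDigraph E) (u : V) :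
    twoOutDeg E u + outDeg E u ≤ ∑ v, outDeg E v := by
  rw [← sum_erase_add _ _ (mem_univ u)]
  refine Nat.add_le_add_right (sum_le_sum_of_subset fun v hv => ?_) _
  exact mem_erase.2 ⟨fun h => hsimple u (h ▸ (mem_filter.1 hv).2), mem_univ v⟩

lemma twoOutDeg_le_outDeg_mul_maxOutDeg (u : V) : twoOutDeg E u ≤ outDeg E u * maxOutDeg E :=
  (sum_le_card_nsmul _ _ _ fun v _ => le_sup (f := outDeg E) (mem_univ v)).trans_eq rfl

lemma StronglyConnected.outDeg_pos [Nontrivial V] (hsc : StronglyConnected E) (u : V) :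
    0 < outDeg E u := by
  obtain ⟨v, hv⟩ := exists_ne u
  obtain h | ⟨w, huw, -⟩ := (hsc u v).cases_head
  · exact absurd h.symm hv
  · exact card_pos.2 ⟨w, mem_filter.2 ⟨mem_univ w, huw⟩⟩

lemma Aalpha_eq_zero [Subsingleton V] [DecidableEq V] (hsimple : IsSimpleDigraph E) (α : ℝ) :
    Aalpha α E = 0 := by
  have hE : ∀ u v, ¬ E u v := fun u v => Subsingleton.elim u v ▸ hsimple u
  ext u v
  simp [Aalpha, outDeg, hE]

lemma exists_norm_le_of_mem_spectrum_Aalpha [DecidableEq V] [Nontrivial V]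
    (hsc : StronglyConnected E) {α : ℝ} (hα0 : 0 ≤ α) (hα1 : α ≤ 1) {μ : ℂ}
    (hμ : μ ∈ spectrum ℂ (Aalpha α E)) :
    ∃ u, ‖μ‖ ≤ α * outDeg E u + (1 - α) * twoOutDeg E u / outDeg E u := by
  obtain ⟨u, hu⟩ := Matrix.exists_norm_mul_le_sum_norm_mul_of_mem_spectrum
    (w := fun v => (outDeg E v : ℝ)) (fun v => Nat.cast_pos.2 (hsc.outDeg_pos v)) hμ
  refine ⟨u, ?_⟩
  have hu' := hu.trans (sum_norm_Aalpha_mul_outDeg_le E hα0 hα1 u)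
  rw [← le_div_iff₀ (Nat.cast_pos.2 (hsc.outDeg_pos u))] at hu'
  exact hu'.trans_eq (by field_simp)

end Digraph

theorem stmt_2_general {V : Type*} [Fintype V] [DecidableEq V]
    (E : V → V → Prop) [DecidableRel E]
    (hsimple : IsSimpleDigraph E) (hsc : StronglyConnected E)
    (k m : ℕ) (hm : m = ∑ v, outDeg E v)
    (hΔ : maxOutDeg E ≤ m - k)
    (α : ℝ) (hα : 1/2 ≤ α) (hα1 : α < 1) :
    lambdaAlpha α E ≤
      ENNReal.ofReal
        (α * ((m : ℝ) - k) + (1 - α) * k / ((m : ℝ) - k) + 1 - α) := by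
  rcases subsingleton_or_nontrivial V with hV | hV
  · rw [lambdaAlpha, Aalpha_eq_zero hsimple, spectrum.spectralRadius_zero]
    exact bot_le
  refine iSup₂_le fun μ hμ => ?_
  obtain ⟨u, hμu⟩ := exists_norm_le_of_mem_spectrum_Aalpha hsc (by linarith) hα1.le hμ
  have hdu := hsc.outDeg_pos u
  have hΔu : outDeg E u ≤ m - k := (le_sup (mem_univ u)).trans hΔ
  have hkm : k < m := by omega
  have hcast : ((m - k : ℕ) : ℝ) = m - k := Nat.cast_sub hkm.le
  have hS₁ : (twoOutDeg E u : ℝ) ≤ m - outDeg E u := by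
    rw [le_sub_iff_add_le]
    exact_mod_cast hm ▸ twoOutDeg_add_outDeg_le hsimple u
  have hS₂ : (twoOutDeg E u : ℝ) ≤ outDeg E u * (m - k) := by
    rw [← hcast]
    exact_mod_cast (twoOutDeg_le_outDeg_mul_maxOutDeg u).trans (Nat.mul_le_mul_left _ hΔ)
  calc (‖μ‖₊ : ℝ≥0∞) = ENNReal.ofReal ‖μ‖ := (ofReal_norm μ).symm
    _ ≤ _ := ENNReal.ofReal_le_ofReal <| hμu.trans <| alpha_mul_add_div_le
      (by exact_mod_cast hkm) (Nat.cast_pos.2 hdu) (hcast ▸ by exact_mod_cast hΔu) hS₁ hS₂ hα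
      hα1.le

theorem stmt_2 {V : Type*} [Fintype V] [DecidableEq V]
    (E : V → V → Prop) [DecidableRel E]
    (hsimple : IsSimpleDigraph E) (hsc : StronglyConnected E)
    (k m : ℕ) (hk : 1 ≤ k) (hm : m = ∑ v, outDeg E v)
    (hΔ : maxOutDeg E ≤ m - k) (hmk : 3 * k ≤ m)
    (α : ℝ) (hα : 1/2 ≤ α) (hα1 : α < 1) :
    lambdaAlpha α E ≤
      ENNReal.ofReal
        (α * ((m : ℝ) - k) + (1 - α) * k / ((m : ℝ) - k) + 1 - α) :=
  stmt_2_general E hsimple hsc k m hm hΔ α hα hα1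
end

section
/- Let G be a strongly connected digraph on n vertices with outdegrees d₁⁺, …, d_n⁺ and average 2-outdegrees m_i⁺ = (Σ_{(v_i,v_j)∈E} d_j⁺)/d_i⁺. For α ∈ [0,1), min_i {α d_i⁺ + (1−α) m_i⁺} ≤ λ_α(G) ≤ max_i {α d_i⁺ + (1−α) m_i⁺}. -/
open Matrix Finset ENNReal

/-!
Conjugating `A_α(G)` by the diagonal matrix of outdegrees gives the nonnegative matrix with
entries `A_α(G)ᵢⱼ dⱼ⁺ / dᵢ⁺`, whose `i`-th row sum is `α dᵢ⁺ + (1 - α) mᵢ⁺`. The spectral radius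
of a nonnegative matrix lies between its smallest and largest row sums: above by Gershgorin's
theorem, below by Gelfand's formula for the `ℓ∞` operator norm, because the row sums of its
`n`-th power are at least `mⁿ` when all row sums are at least `m`. If some outdegree vanishes,
strong connectivity leaves a single vertex without arcs and both sides are `0`.
-/

namespace Matrix

open scoped Matrix.Norms.Operator in
theorem sum_norm_le_linfty_opNorm {m n α : Type*} [Fintype m] [Fintype n]
    [SeminormedAddCommGroup α] (A : Matrix m n α) (i : m) : ∑ j, ‖A i j‖ ≤ ‖A‖ := by
  rw [linfty_opNorm_def]
  simpa using NNReal.coe_le_coe.2 (Finset.le_sup (f := fun i => ∑ j, ‖A i j‖₊) (mem_univ i))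

variable {V : Type*} [Fintype V]

theorem mulVec_mono_of_nonneg {B : Matrix V V ℝ} (hB : ∀ i j, 0 ≤ B i j) {x y : V → ℝ}
    (hxy : x ≤ y) : B *ᵥ x ≤ B *ᵥ y := fun i =>
  Finset.sum_le_sum fun j _ => mul_le_mul_of_nonneg_left (hxy j) (hB i j)

theorem sum_mul_div_eq_mulVec_div (A : Matrix V V ℝ) (x : V → ℝ) (i : V) :
    ∑ j, A i j * x j / x i = (A *ᵥ x) i / x i := by
  rw [← sum_div]; rfl

variable [DecidableEq V]

theorem spectralRadius_le_of_forall_sum_norm_le (C : Matrix V V ℂ) {M : ℝ}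
    (h : ∀ i, ∑ j, ‖C i j‖ ≤ M) : spectralRadius ℂ C ≤ ENNReal.ofReal M := by
  refine iSup₂_le fun μ hμ => ?_
  rw [← AlgEquiv.spectrum_eq toLinAlgEquiv' C, ← Module.End.hasEigenvalue_iff_mem_spectrum] at hμ
  obtain ⟨k, hk⟩ := eigenvalue_mem_ball hμ
  rw [Metric.mem_closedBall, dist_eq_norm] at hk
  have hμk : ‖μ‖ ≤ ∑ j, ‖C k j‖ := calc
    ‖μ‖ ≤ ‖C k k‖ + ‖μ - C k k‖ := norm_le_insert' μ (C k k)
    _ ≤ ‖C k k‖ + ∑ j ∈ univ.erase k, ‖C k j‖ := by gcongr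
    _ = ∑ j, ‖C k j‖ := add_sum_erase _ (fun j => ‖C k j‖) (mem_univ k)
  rw [← ENNReal.ofReal_coe_nnreal, coe_nnnorm]
  exact ENNReal.ofReal_le_ofReal (hμk.trans (h k))

theorem spectralRadius_diagonal_inv_mul_mul_diagonal (C : Matrix V V ℂ) {w : V → ℂ}
    (hw : ∀ i, w i ≠ 0) :
    spectralRadius ℂ (diagonal w⁻¹ * C * diagonal w) = spectralRadius ℂ C := by
  let u : (Matrix V V ℂ)ˣ :=
    ⟨diagonal w, diagonal w⁻¹, by simp [diagonal_mul_diagonal, hw],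
      by simp [diagonal_mul_diagonal, hw]⟩
  exact congrArg (fun s => ⨆ μ ∈ s, (‖μ‖₊ : ℝ≥0∞))
    (spectrum.units_conjugate' (u := u) (a := C))

theorem pow_smul_le_pow_mulVec {B : Matrix V V ℝ} (hB : ∀ i j, 0 ≤ B i j) {m : ℝ}
    (hm : 0 ≤ m) {x : V → ℝ} (hx : m • x ≤ B *ᵥ x) (n : ℕ) : m ^ n • x ≤ (B ^ n) *ᵥ x := by
  induction n with
  | zero => simp
  | succ n ih =>
    calc m ^ (n + 1) • x = m ^ n • m • x := by rw [pow_succ, mul_smul]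
      _ ≤ m ^ n • (B *ᵥ x) := smul_le_smul_of_nonneg_left hx (pow_nonneg hm n)
      _ = B *ᵥ (m ^ n • x) := (mulVec_smul B _ x).symm
      _ ≤ B *ᵥ ((B ^ n) *ᵥ x) := mulVec_mono_of_nonneg hB ih
      _ = (B ^ (n + 1)) *ᵥ x := by rw [mulVec_mulVec, pow_succ']

open scoped Matrix.Norms.Operator in
theorem ofReal_le_spectralRadius_map_of_le_sum [Nonempty V] {B : Matrix V V ℝ}
    (hB : ∀ i j, 0 ≤ B i j) {m : ℝ} (h : ∀ i, m ≤ ∑ j, B i j) :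
    ENNReal.ofReal m ≤ spectralRadius ℂ (B.map ((↑) : ℝ → ℂ)) := by
  rcases le_or_gt m 0 with hm | hm
  · simp [ENNReal.ofReal_of_nonpos hm]
  have hpow (n : ℕ) : ENNReal.ofReal m ^ n ≤ ‖B.map ((↑) : ℝ → ℂ) ^ n‖₊ := by
    obtain ⟨i⟩ := ‹Nonempty V›
    have hrow : m ^ n ≤ ∑ j, (B ^ n) i j := by
      have hB1 : m • 1 ≤ B *ᵥ 1 := fun i => by simpa [mulVec, dotProduct] using h i
      simpa [mulVec, dotProduct] using pow_smul_le_pow_mulVec hB hm.le hB1 n i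
    have hmap : B.map ((↑) : ℝ → ℂ) ^ n = (B ^ n).map (↑) :=
      (map_pow Complex.ofRealHom.mapMatrix B n).symm
    rw [← ENNReal.ofReal_pow hm.le, ← ENNReal.ofReal_coe_nnreal, coe_nnnorm, hmap]
    refine ENNReal.ofReal_le_ofReal (hrow.trans (le_trans ?_ (sum_norm_le_linfty_opNorm _ i)))
    exact sum_le_sum fun j _ => by simp [le_abs_self]
  refine ge_of_tendsto (spectrum.pow_nnnorm_pow_one_div_tendsto_nhds_spectralRadius _) ?_
  filter_upwards [Filter.eventually_ne_atTop 0] with n hn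
  calc ENNReal.ofReal m = (ENNReal.ofReal m ^ n) ^ (1 / n : ℝ) := by
        rw [one_div, ENNReal.pow_rpow_inv_natCast hn]
    _ ≤ _ := ENNReal.rpow_le_rpow (hpow n) (by positivity)

theorem spectralRadius_map_le_of_sum_le {B : Matrix V V ℝ} (hB : ∀ i j, 0 ≤ B i j) {M : ℝ}
    (h : ∀ i, ∑ j, B i j ≤ M) : spectralRadius ℂ (B.map ((↑) : ℝ → ℂ)) ≤ ENNReal.ofReal M :=
  spectralRadius_le_of_forall_sum_norm_le _ fun i => by
    simpa [abs_of_nonneg (hB i _)] using h i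

theorem spectralRadius_map_eq_of_diagonal_similar (A : Matrix V V ℝ) {x : V → ℝ}
    (hx : ∀ i, x i ≠ 0) :
    spectralRadius ℂ (A.map ((↑) : ℝ → ℂ)) =
      spectralRadius ℂ ((of fun i j => A i j * x j / x i).map ((↑) : ℝ → ℂ)) := by
  have hw : ∀ i, ((x i : ℝ) : ℂ) ≠ 0 := fun i => Complex.ofReal_ne_zero.2 (hx i)
  rw [← spectralRadius_diagonal_inv_mul_mul_diagonal _ hw]
  congr 1
  ext i j
  simp only [mul_diagonal, diagonal_mul, Pi.inv_apply, map_apply, div_eq_mul_inv, of_apply,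
    Complex.ofReal_mul, Complex.ofReal_inv]
  ring

theorem ofReal_le_spectralRadius_map_of_mul_le_mulVec [Nonempty V] {A : Matrix V V ℝ}
    (hA : ∀ i j, 0 ≤ A i j) {x : V → ℝ} (hx : ∀ i, 0 < x i) {m : ℝ}
    (h : ∀ i, m * x i ≤ (A *ᵥ x) i) :
    ENNReal.ofReal m ≤ spectralRadius ℂ (A.map ((↑) : ℝ → ℂ)) := by
  rw [spectralRadius_map_eq_of_diagonal_similar A fun i => (hx i).ne']
  refine ofReal_le_spectralRadius_map_of_le_sum (fun i j => ?_) fun i => ?_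
  · exact div_nonneg (mul_nonneg (hA i j) (hx j).le) (hx i).le
  · simp only [of_apply]
    rw [sum_mul_div_eq_mulVec_div, le_div_iff₀ (hx i)]
    exact h i

theorem spectralRadius_map_le_of_mulVec_le_mul {A : Matrix V V ℝ}
    (hA : ∀ i j, 0 ≤ A i j) {x : V → ℝ} (hx : ∀ i, 0 < x i) {M : ℝ}
    (h : ∀ i, (A *ᵥ x) i ≤ M * x i) :
    spectralRadius ℂ (A.map ((↑) : ℝ → ℂ)) ≤ ENNReal.ofReal M := by
  rw [spectralRadius_map_eq_of_diagonal_similar A fun i => (hx i).ne']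
  refine spectralRadius_map_le_of_sum_le (fun i j => ?_) fun i => ?_
  · exact div_nonneg (mul_nonneg (hA i j) (hx j).le) (hx i).le
  · simp only [of_apply]
    rw [sum_mul_div_eq_mulVec_div, div_le_iff₀ (hx i)]
    exact h i

end Matrix

section Digraph

variable {V : Type*} [Fintype V] (E : V → V → Prop) [DecidableRel E]

noncomputable def avgTwoOutDeg (u : V) : ℝ :=
  (∑ v ∈ Finset.univ.filter (fun v => E u v), (outDeg E v : ℝ)) / (outDeg E u : ℝ)

theorem outDeg_eq_zero_iff {u : V} : outDeg E u = 0 ↔ ∀ v, ¬E u v := by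
  simp [outDeg, filter_eq_empty_iff]

variable {E} in
theorem StronglyConnected.outDeg_eq_zero (hsc : StronglyConnected E) {u : V}
    (hu : outDeg E u = 0) (v : V) : outDeg E v = 0 := by
  rcases (hsc u v).cases_head with rfl | ⟨w, huw, -⟩
  · exact hu
  · exact absurd huw ((outDeg_eq_zero_iff E).1 hu w)

variable [DecidableEq V]

noncomputable def AalphaReal (α : ℝ) : Matrix V V ℝ :=
  α • diagonal (fun u => (outDeg E u : ℝ)) + (1 - α) • of (fun u v => if E u v then 1 else 0)

theorem Aalpha_eq_map (α : ℝ) : Aalpha α E = (AalphaReal E α).map ((↑) : ℝ → ℂ) := by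
  ext u v
  simp only [Aalpha, AalphaReal, Matrix.add_apply, Matrix.smul_apply, smul_eq_mul,
    diagonal_apply, of_apply, map_apply]
  split_ifs <;> push_cast <;> ring

theorem Aalpha_eq_zero_s8 (α : ℝ) (h : ∀ u, outDeg E u = 0) : Aalpha α E = 0 := by
  ext u v
  simp [Aalpha, h, (outDeg_eq_zero_iff E).1 (h u) v]

theorem AalphaReal_nonneg {α : ℝ} (hα0 : 0 ≤ α) (hα1 : α ≤ 1) (u v : V) :
    0 ≤ AalphaReal E α u v := by
  have h1α : 0 ≤ 1 - α := sub_nonneg.2 hα1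
  simp only [AalphaReal, Matrix.add_apply, Matrix.smul_apply, smul_eq_mul, diagonal_apply,
    of_apply]
  exact add_nonneg (mul_nonneg hα0 (by split_ifs <;> positivity))
    (mul_nonneg h1α (by split_ifs <;> norm_num))

theorem AalphaReal_mulVec_outDeg (α : ℝ) {u : V} (hu : outDeg E u ≠ 0) :
    (AalphaReal E α *ᵥ fun v => (outDeg E v : ℝ)) u =
      (α * outDeg E u + (1 - α) * avgTwoOutDeg E u) * outDeg E u := by
  have hu' : (outDeg E u : ℝ) ≠ 0 := Nat.cast_ne_zero.2 hu
  have hrow : (AalphaReal E α *ᵥ fun v => (outDeg E v : ℝ)) u =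
      α * outDeg E u * outDeg E u +
        (1 - α) * ∑ v ∈ univ.filter (fun v => E u v), (outDeg E v : ℝ) := by
    simp [AalphaReal, mulVec, dotProduct, add_mul, sum_add_distrib, diagonal_apply, sum_filter,
      mul_sum]
  rw [hrow, avgTwoOutDeg]
  field_simp

end Digraph

theorem stmt_8_general {V : Type*} [Fintype V] [DecidableEq V] [Nonempty V]
    (E : V → V → Prop) [DecidableRel E]
    (hsc : StronglyConnected E)
    (α : ℝ) (hα0 : 0 ≤ α) (hα1 : α < 1) :
    ENNReal.ofReal (⨅ i : V, (α * (outDeg E i : ℝ) +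
        (1 - α) * ((∑ j ∈ Finset.univ.filter (fun j => E i j), (outDeg E j : ℝ)) / (outDeg E i : ℝ))))
      ≤ lambdaAlpha α E ∧
    lambdaAlpha α E ≤
      ENNReal.ofReal (⨆ i : V, (α * (outDeg E i : ℝ) +
        (1 - α) * ((∑ j ∈ Finset.univ.filter (fun j => E i j), (outDeg E j : ℝ)) / (outDeg E i : ℝ)))) := by
  set r : V → ℝ := fun i => α * outDeg E i + (1 - α) * avgTwoOutDeg E i
  by_cases hzero : ∃ u, outDeg E u = 0
  · obtain ⟨u, hu⟩ := hzero
    have h0 := hsc.outDeg_eq_zero hu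
    simp [lambdaAlpha, Aalpha_eq_zero_s8 E α h0, h0]
  · have hpos (i : V) : outDeg E i ≠ 0 := fun h => hzero ⟨i, h⟩
    have hd (i : V) : (0 : ℝ) < outDeg E i := Nat.cast_pos.2 (Nat.pos_of_ne_zero (hpos i))
    have hA := AalphaReal_nonneg E hα0 hα1.le
    have hAd (i : V) := AalphaReal_mulVec_outDeg E α (hpos i)
    rw [lambdaAlpha, Aalpha_eq_map]
    refine ⟨ofReal_le_spectralRadius_map_of_mul_le_mulVec hA hd fun i => ?_,
      spectralRadius_map_le_of_mulVec_le_mul hA hd fun i => ?_⟩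
    · rw [hAd i]
      exact mul_le_mul_of_nonneg_right (ciInf_le (Finite.bddBelow_range r) i) (hd i).le
    · rw [hAd i]
      exact mul_le_mul_of_nonneg_right (le_ciSup (Finite.bddAbove_range r) i) (hd i).le

theorem stmt_8 {V : Type*} [Fintype V] [DecidableEq V] [Nonempty V]
    (E : V → V → Prop) [DecidableRel E]
    (hsimple : IsSimpleDigraph E) (hsc : StronglyConnected E)
    (α : ℝ) (hα0 : 0 ≤ α) (hα1 : α < 1) :
    ENNReal.ofReal (⨅ i : V, (α * (outDeg E i : ℝ) +
        (1 - α) * ((∑ j ∈ Finset.univ.filter (fun j => E i j), (outDeg E j : ℝ)) / (outDeg E i : ℝ))))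
      ≤ lambdaAlpha α E ∧
    lambdaAlpha α E ≤
      ENNReal.ofReal (⨆ i : V, (α * (outDeg E i : ℝ) +
        (1 - α) * ((∑ j ∈ Finset.univ.filter (fun j => E i j), (outDeg E j : ℝ)) / (outDeg E i : ℝ)))) :=
  stmt_8_general E hsc α hα0 hα1
end
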